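/- arXiv:1406.3612 — 4 statements merged into one kernel-verified Lean document; each statement's English description precedes it below -/
import Mathlib

section
/- Let a, z, u, v be G-measurable square-integrable random variables. Then E[(a + √δ · z · e + u · η + v · μ)²] = E[a²] + δ E[z²] + κ(1−κ) E[u²] + κ(1−κ) E[v²]. -/
open MeasureTheory ProbabilityTheory ENNReal

lemma integral_two_point {Ω : Type*} (m0 : MeasurableSpace Ω) (P : Measure Ω) [IsProbabilityMeasure P]
    (X : Ω → ℝ) (hX : Measurable X) (c₁ c₂ : ℝ) (hne : c₁ ≠ c₂)
    (hsum : P {ω | X ω = c₁} + P {ω | X ω = c₂} = 1) (f : ℝ → ℝ) :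
    ∫ ω, f (X ω) ∂P = f c₁ * (P {ω | X ω = c₁}).toReal + f c₂ * (P {ω | X ω = c₂}).toReal := by
  have hs1 : MeasurableSet {ω | X ω = c₁} := hX (measurableSet_singleton c₁)
  have hs2 : MeasurableSet {ω | X ω = c₂} := hX (measurableSet_singleton c₂)
  have hdisj : Disjoint {ω | X ω = c₁} {ω | X ω = c₂} := by
    rw [Set.disjoint_left]
    rintro ω h1 h2
    exact hne (h1 ▸ h2)
  have hu : P ({ω | X ω = c₁} ∪ {ω | X ω = c₂}) = 1 := by
    rw [measure_union hdisj hs2, hsum]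
  have h0 : P ({ω | X ω = c₁} ∪ {ω | X ω = c₂})ᶜ = 0 := by
    rw [measure_compl (hs1.union hs2) (measure_ne_top _ _), hu, measure_univ, tsub_self]
  have hae : ∀ᵐ ω ∂P, X ω = c₁ ∨ X ω = c₂ := by
    rw [ae_iff]
    rw [show {ω | ¬(X ω = c₁ ∨ X ω = c₂)} = ({ω | X ω = c₁} ∪ {ω | X ω = c₂})ᶜ from by
      ext ω; simp [not_or]]
    exact h0
  have hcg : (fun ω => f (X ω)) =ᵐ[P]
      fun ω => Set.indicator {ω | X ω = c₁} (fun _ => f c₁) ω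
        + Set.indicator {ω | X ω = c₂} (fun _ => f c₂) ω := by
    filter_upwards [hae] with ω hω
    rcases hω with h | h
    · simp [Set.indicator_apply, Set.mem_setOf_eq, h, hne, hne.symm]
    · simp [Set.indicator_apply, Set.mem_setOf_eq, h, hne, hne.symm]
  rw [integral_congr_ae hcg,
    integral_add ((integrable_const _).indicator hs1) ((integrable_const _).indicator hs2),
    integral_indicator_const _ hs1, integral_indicator_const _ hs2]
  simp [mul_comm, measureReal_def]

lemma ae_two_point {Ω : Type*} (m0 : MeasurableSpace Ω) (P : Measure Ω) [IsProbabilityMeasure P]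
    (X : Ω → ℝ) (hX : Measurable X) (c₁ c₂ : ℝ) (hne : c₁ ≠ c₂)
    (hsum : P {ω | X ω = c₁} + P {ω | X ω = c₂} = 1) :
    ∀ᵐ ω ∂P, X ω = c₁ ∨ X ω = c₂ := by
  have hs1 : MeasurableSet {ω | X ω = c₁} := hX (measurableSet_singleton c₁)
  have hs2 : MeasurableSet {ω | X ω = c₂} := hX (measurableSet_singleton c₂)
  have hdisj : Disjoint {ω | X ω = c₁} {ω | X ω = c₂} := by
    rw [Set.disjoint_left]
    rintro ω h1 h2
    exact hne (h1 ▸ h2)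
  have hu : P ({ω | X ω = c₁} ∪ {ω | X ω = c₂}) = 1 := by
    rw [measure_union hdisj hs2, hsum]
  have h0 : P ({ω | X ω = c₁} ∪ {ω | X ω = c₂})ᶜ = 0 := by
    rw [measure_compl (hs1.union hs2) (measure_ne_top _ _), hu, measure_univ, tsub_self]
  rw [ae_iff]
  rw [show {ω | ¬(X ω = c₁ ∨ X ω = c₂)} = ({ω | X ω = c₁} ∪ {ω | X ω = c₂})ᶜ from by
    ext ω; simp [not_or]]
  exact h0

/-- Orthogonality / isometry identity for one step of the random-walk martingale
representation: `E[(a + √δ z e + u η + v μ)²] = E[a²] + δ E[z²] + κ(1-κ)(E[u²]+E[v²])`. -/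
theorem stmt_2
    {Ω : Type*} (G : MeasurableSpace Ω) [m0 : MeasurableSpace Ω] (P : Measure Ω) [IsProbabilityMeasure P]
    (hG : G ≤ m0)
    (κ δ : ℝ) (hκ : κ ∈ Set.Ioo (0 : ℝ) 1) (hδ : 0 < δ)
    (e η : Ω → ℝ) (he : Measurable e) (hη : Measurable η)
    (hindepG : Indep (MeasurableSpace.comap (fun ω => (e ω, η ω)) inferInstance) G P)
    (hindep : IndepFun e η P)
    (he1 : P {ω | e ω = 1} = 1 / 2) (hem1 : P {ω | e ω = -1} = 1 / 2)
    (hη1 : P {ω | η ω = κ - 1} = ENNReal.ofReal κ)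
    (hη2 : P {ω | η ω = κ} = ENNReal.ofReal (1 - κ))
    (a z u v : Ω → ℝ)
    (ha : Measurable[G] a) (hz : Measurable[G] z)
    (hu : Measurable[G] u) (hv : Measurable[G] v)
    (haL : MemLp a 2 P) (hzL : MemLp z 2 P) (huL : MemLp u 2 P) (hvL : MemLp v 2 P) :
    ∫ ω, (a ω + Real.sqrt δ * z ω * e ω + u ω * η ω + v ω * (e ω * η ω)) ^ 2 ∂P
      = ∫ ω, (a ω) ^ 2 ∂P + δ * ∫ ω, (z ω) ^ 2 ∂P
        + κ * (1 - κ) * ∫ ω, (u ω) ^ 2 ∂P + κ * (1 - κ) * ∫ ω, (v ω) ^ 2 ∂P := by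
  obtain ⟨hκ0, hκ1⟩ := hκ
  set s := Real.sqrt δ with hs
  have hs2 : s ^ 2 = δ := Real.sq_sqrt hδ.le
  have he0 : Measurable[m0] e := he
  have hη0 : Measurable[m0] η := hη
  set M := MeasurableSpace.comap (fun ω => (e ω, η ω)) inferInstance with hMdef
  have hpM : Measurable[M] (fun ω => (e ω, η ω)) := Measurable.of_comap_le le_rfl
  have hMe : Measurable[M] e := measurable_fst.comp hpM
  have hMη : Measurable[M] η := measurable_snd.comp hpM
  have hM : M ≤ m0 := (he0.prodMk hη0).comap_le
  -- sums of probabilities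
  have hesum : P {ω | e ω = 1} + P {ω | e ω = -1} = 1 := by
    rw [he1, hem1, ENNReal.add_halves]
  have hηsum : P {ω | η ω = κ - 1} + P {ω | η ω = κ} = 1 := by
    rw [hη1, hη2, ← ENNReal.ofReal_add (by linarith) (by linarith)]
    norm_num
  -- a.e. two-valuedness
  have heA : ∀ᵐ ω ∂P, e ω = 1 ∨ e ω = -1 :=
    ae_two_point m0 P e he0 1 (-1) (by norm_num) hesum
  have hηA : ∀ᵐ ω ∂P, η ω = κ - 1 ∨ η ω = κ :=
    ae_two_point m0 P η hη0 (κ - 1) κ (by norm_num) hηsum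
  -- toReal values
  have ht1 : ((1 : ℝ≥0∞) / 2).toReal = 1 / 2 := by norm_num
  have ht2 : (ENNReal.ofReal κ).toReal = κ := ENNReal.toReal_ofReal hκ0.le
  have ht3 : (ENNReal.ofReal (1 - κ)).toReal = 1 - κ := ENNReal.toReal_ofReal (by linarith)
  -- moments
  have hIe : ∫ ω, e ω ∂P = 0 := by
    have := integral_two_point m0 P e he0 1 (-1) (by norm_num) hesum (fun x => x)
    rw [he1, hem1] at this
    simpa [ht1] using this
  have hIe2 : ∫ ω, (e ω) ^ 2 ∂P = 1 := by
    have := integral_two_point m0 P e he0 1 (-1) (by norm_num) hesum (fun x => x ^ 2)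
    rw [he1, hem1] at this
    rw [this, ht1]; norm_num
  have hIη : ∫ ω, η ω ∂P = 0 := by
    have := integral_two_point m0 P η hη0 (κ - 1) κ (by norm_num) hηsum (fun x => x)
    rw [hη1, hη2] at this
    rw [this, ht2, ht3]; ring
  have hIη2 : ∫ ω, (η ω) ^ 2 ∂P = κ * (1 - κ) := by
    have := integral_two_point m0 P η hη0 (κ - 1) κ (by norm_num) hηsum (fun x => x ^ 2)
    rw [hη1, hη2] at this
    rw [this, ht2, ht3]; ring
  -- joint moments
  have hindep2 : IndepFun (fun ω => (e ω) ^ 2) (fun ω => (η ω) ^ 2) P :=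
    hindep.comp (measurable_id.pow_const 2) (measurable_id.pow_const 2)
  have hindepA : IndepFun (fun ω => (e ω) ^ 2) η P :=
    hindep.comp (measurable_id.pow_const 2) measurable_id
  have hindepB : IndepFun e (fun ω => (η ω) ^ 2) P :=
    hindep.comp measurable_id (measurable_id.pow_const 2)
  have hIeη : ∫ ω, e ω * η ω ∂P = 0 := by
    rw [hindep.integral_fun_mul_eq_mul_integral he0.aestronglyMeasurable hη0.aestronglyMeasurable, hIe, zero_mul]
  have hIe2η : ∫ ω, (e ω) ^ 2 * η ω ∂P = 0 := by
    rw [hindepA.integral_fun_mul_eq_mul_integral (he0.pow_const 2).aestronglyMeasurable hη0.aestronglyMeasurable,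
      hIη, mul_zero]
  have hIeη2 : ∫ ω, e ω * (η ω) ^ 2 ∂P = 0 := by
    rw [hindepB.integral_fun_mul_eq_mul_integral he0.aestronglyMeasurable (hη0.pow_const 2).aestronglyMeasurable,
      hIe, zero_mul]
  have hIe2η2 : ∫ ω, (e ω) ^ 2 * (η ω) ^ 2 ∂P = κ * (1 - κ) := by
    rw [hindep2.integral_fun_mul_eq_mul_integral (he0.pow_const 2).aestronglyMeasurable
      (hη0.pow_const 2).aestronglyMeasurable, hIe2, hIη2, one_mul]
  -- factorization: G-measurable × noise
  have hfac : ∀ (X N : Ω → ℝ), Measurable[G] X → Measurable[M] N →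
      ∫ ω, X ω * N ω ∂P = (∫ ω, X ω ∂P) * ∫ ω, N ω ∂P := by
    intro X N hX hN
    have hXN : IndepFun X N P :=
      indep_of_indep_of_le_left (indep_of_indep_of_le_right hindepG.symm hN.comap_le)
        hX.comap_le
    exact hXN.integral_fun_mul_eq_mul_integral ((hX.mono hG le_rfl)).aestronglyMeasurable
      ((hN.mono hM le_rfl)).aestronglyMeasurable
  -- integrability helpers
  have hmul : ∀ (X Y : Ω → ℝ), MemLp X 2 P → MemLp Y 2 P →
      Integrable (fun ω => X ω * Y ω) P := by
    intro X Y hX hY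
    have h := memLp_one_iff_integrable.mp
      (hY.smul (φ := X) hX (p := 2) (q := 2) (r := 1))
    exact h
  have hInt : ∀ (X N : Ω → ℝ), Integrable X P → AEStronglyMeasurable[m0] N P →
      (∀ᵐ ω ∂P, |N ω| ≤ 1) → Integrable (fun ω => X ω * N ω) P := by
    intro X N hX hN hb
    have := hX.bdd_mul (f := N) (c := 1) hN (by simpa [Real.norm_eq_abs] using hb)
    exact this.congr (ae_of_all _ fun ω => mul_comm _ _)
  -- bounds on noise
  have hbe : ∀ᵐ ω ∂P, |e ω| ≤ 1 := by
    filter_upwards [heA] with ω h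
    rcases h with h | h <;> rw [h] <;> norm_num
  have hbη : ∀ᵐ ω ∂P, |η ω| ≤ 1 := by
    filter_upwards [hηA] with ω h
    rcases h with h | h <;> rw [h, abs_le] <;> constructor <;> linarith
  have hbe2 : ∀ᵐ ω ∂P, |(e ω) ^ 2| ≤ 1 := by
    filter_upwards [hbe] with ω h
    rw [abs_pow]; nlinarith [abs_nonneg (e ω)]
  have hbη2 : ∀ᵐ ω ∂P, |(η ω) ^ 2| ≤ 1 := by
    filter_upwards [hbη] with ω h
    rw [abs_pow]; nlinarith [abs_nonneg (η ω)]
  have hbmul : ∀ (x y : ℝ), |x| ≤ 1 → |y| ≤ 1 → |x * y| ≤ 1 := by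
    intro x y hx hy
    rw [abs_mul]
    nlinarith [abs_nonneg x, abs_nonneg y]
  have hbeη : ∀ᵐ ω ∂P, |e ω * η ω| ≤ 1 := by
    filter_upwards [hbe, hbη] with ω h1 h2 using hbmul _ _ h1 h2
  have hbe2η : ∀ᵐ ω ∂P, |(e ω) ^ 2 * η ω| ≤ 1 := by
    filter_upwards [hbe2, hbη] with ω h1 h2 using hbmul _ _ h1 h2
  have hbeη2 : ∀ᵐ ω ∂P, |e ω * (η ω) ^ 2| ≤ 1 := by
    filter_upwards [hbe, hbη2] with ω h1 h2 using hbmul _ _ h1 h2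
  have hbe2η2 : ∀ᵐ ω ∂P, |(e ω) ^ 2 * (η ω) ^ 2| ≤ 1 := by
    filter_upwards [hbe2, hbη2] with ω h1 h2 using hbmul _ _ h1 h2
  -- measurability (ambient) of noises
  have hm_e : AEStronglyMeasurable[m0] e P := he0.aestronglyMeasurable
  have hm_η : AEStronglyMeasurable[m0] η P := hη0.aestronglyMeasurable
  have hm_e2 : AEStronglyMeasurable[m0] (fun ω => (e ω) ^ 2) P := (he0.pow_const 2).aestronglyMeasurable
  have hm_η2 : AEStronglyMeasurable[m0] (fun ω => (η ω) ^ 2) P := (hη0.pow_const 2).aestronglyMeasurable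
  have hm_eη : AEStronglyMeasurable[m0] (fun ω => e ω * η ω) P := (he0.mul hη0).aestronglyMeasurable
  have hm_e2η : AEStronglyMeasurable[m0] (fun ω => (e ω) ^ 2 * η ω) P :=
    ((he0.pow_const 2).mul hη0).aestronglyMeasurable
  have hm_eη2 : AEStronglyMeasurable[m0] (fun ω => e ω * (η ω) ^ 2) P :=
    (he0.mul (hη0.pow_const 2)).aestronglyMeasurable
  have hm_e2η2 : AEStronglyMeasurable[m0] (fun ω => (e ω) ^ 2 * (η ω) ^ 2) P :=
    ((he0.pow_const 2).mul (hη0.pow_const 2)).aestronglyMeasurable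
  -- integrable squares of G variables
  have ia2 : Integrable (fun ω => (a ω) ^ 2) P := by
    simpa [pow_two] using hmul a a haL haL
  have iz2 : Integrable (fun ω => (z ω) ^ 2) P := by
    simpa [pow_two] using hmul z z hzL hzL
  have iu2 : Integrable (fun ω => (u ω) ^ 2) P := by
    simpa [pow_two] using hmul u u huL huL
  have iv2 : Integrable (fun ω => (v ω) ^ 2) P := by
    simpa [pow_two] using hmul v v hvL hvL
  -- the ten terms: integrability
  have iT2 : Integrable (fun ω => s ^ 2 * ((z ω) ^ 2 * (e ω) ^ 2)) P :=
    (hInt _ _ iz2 hm_e2 hbe2).const_mul _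
  have iT3 : Integrable (fun ω => (u ω) ^ 2 * (η ω) ^ 2) P := hInt _ _ iu2 hm_η2 hbη2
  have iT4 : Integrable (fun ω => (v ω) ^ 2 * ((e ω) ^ 2 * (η ω) ^ 2)) P :=
    hInt _ _ iv2 hm_e2η2 hbe2η2
  have iT5 : Integrable (fun ω => (2 * s) * (a ω * z ω * e ω)) P :=
    ((hInt _ _ (hmul a z haL hzL) hm_e hbe).const_mul _)
  have iT6 : Integrable (fun ω => 2 * (a ω * u ω * η ω)) P :=
    ((hInt _ _ (hmul a u haL huL) hm_η hbη).const_mul _)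
  have iT7 : Integrable (fun ω => 2 * (a ω * v ω * (e ω * η ω))) P :=
    ((hInt _ _ (hmul a v haL hvL) hm_eη hbeη).const_mul _)
  have iT8 : Integrable (fun ω => (2 * s) * (z ω * u ω * (e ω * η ω))) P :=
    ((hInt _ _ (hmul z u hzL huL) hm_eη hbeη).const_mul _)
  have iT9 : Integrable (fun ω => (2 * s) * (z ω * v ω * ((e ω) ^ 2 * η ω))) P :=
    ((hInt _ _ (hmul z v hzL hvL) hm_e2η hbe2η).const_mul _)
  have iT10 : Integrable (fun ω => 2 * (u ω * v ω * (e ω * (η ω) ^ 2))) P :=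
    ((hInt _ _ (hmul u v huL hvL) hm_eη2 hbeη2).const_mul _)
  -- values of each term's integral
  have vT2 : ∫ ω, (z ω) ^ 2 * (e ω) ^ 2 ∂P = ∫ ω, (z ω) ^ 2 ∂P := by
    rw [hfac _ _ (hz.pow_const 2) (hMe.pow_const 2), hIe2, mul_one]
  have vT3 : ∫ ω, (u ω) ^ 2 * (η ω) ^ 2 ∂P = κ * (1 - κ) * ∫ ω, (u ω) ^ 2 ∂P := by
    rw [hfac _ _ (hu.pow_const 2) (hMη.pow_const 2), hIη2]; ring
  have vT4 : ∫ ω, (v ω) ^ 2 * ((e ω) ^ 2 * (η ω) ^ 2) ∂P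
      = κ * (1 - κ) * ∫ ω, (v ω) ^ 2 ∂P := by
    rw [hfac _ (fun ω => (e ω) ^ 2 * (η ω) ^ 2) (hv.pow_const 2) ((hMe.pow_const 2).mul (hMη.pow_const 2)), hIe2η2]; ring
  have vT5 : ∫ ω, a ω * z ω * e ω ∂P = 0 := by
    rw [hfac (fun ω => a ω * z ω) _ (ha.mul hz) hMe, hIe, mul_zero]
  have vT6 : ∫ ω, a ω * u ω * η ω ∂P = 0 := by
    rw [hfac (fun ω => a ω * u ω) _ (ha.mul hu) hMη, hIη, mul_zero]
  have vT7 : ∫ ω, a ω * v ω * (e ω * η ω) ∂P = 0 := by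
    rw [hfac (fun ω => a ω * v ω) (fun ω => e ω * η ω) (ha.mul hv) (hMe.mul hMη), hIeη, mul_zero]
  have vT8 : ∫ ω, z ω * u ω * (e ω * η ω) ∂P = 0 := by
    rw [hfac (fun ω => z ω * u ω) (fun ω => e ω * η ω) (hz.mul hu) (hMe.mul hMη), hIeη, mul_zero]
  have vT9 : ∫ ω, z ω * v ω * ((e ω) ^ 2 * η ω) ∂P = 0 := by
    rw [hfac (fun ω => z ω * v ω) (fun ω => (e ω) ^ 2 * η ω) (hz.mul hv) ((hMe.pow_const 2).mul hMη), hIe2η, mul_zero]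
  have vT10 : ∫ ω, u ω * v ω * (e ω * (η ω) ^ 2) ∂P = 0 := by
    rw [hfac (fun ω => u ω * v ω) (fun ω => e ω * (η ω) ^ 2) (hu.mul hv) (hMe.mul (hMη.pow_const 2)), hIeη2, mul_zero]
  -- expand the square
  have hexp : (fun ω => (a ω + s * z ω * e ω + u ω * η ω + v ω * (e ω * η ω)) ^ 2)
      = fun ω => (a ω) ^ 2
        + (s ^ 2 * ((z ω) ^ 2 * (e ω) ^ 2)
        + ((u ω) ^ 2 * (η ω) ^ 2
        + ((v ω) ^ 2 * ((e ω) ^ 2 * (η ω) ^ 2)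
        + ((2 * s) * (a ω * z ω * e ω)
        + (2 * (a ω * u ω * η ω)
        + (2 * (a ω * v ω * (e ω * η ω))
        + ((2 * s) * (z ω * u ω * (e ω * η ω))
        + ((2 * s) * (z ω * v ω * ((e ω) ^ 2 * η ω))
        + 2 * (u ω * v ω * (e ω * (η ω) ^ 2)))))))))) := by
    funext ω; ring
  rw [hexp]
  have t9 : Integrable (fun ω => 2 * s * (z ω * v ω * (e ω ^ 2 * η ω)) + (2 * (u ω * v ω * (e ω * η ω ^ 2)))) P := iT9.add iT10
  have t8 : Integrable (fun ω => 2 * s * (z ω * u ω * (e ω * η ω)) + (2 * s * (z ω * v ω * (e ω ^ 2 * η ω)) + (2 * (u ω * v ω * (e ω * η ω ^ 2))))) P := iT8.add t9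
  have t7 : Integrable (fun ω => 2 * (a ω * v ω * (e ω * η ω)) + (2 * s * (z ω * u ω * (e ω * η ω)) + (2 * s * (z ω * v ω * (e ω ^ 2 * η ω)) + (2 * (u ω * v ω * (e ω * η ω ^ 2)))))) P := iT7.add t8
  have t6 : Integrable (fun ω => 2 * (a ω * u ω * η ω) + (2 * (a ω * v ω * (e ω * η ω)) + (2 * s * (z ω * u ω * (e ω * η ω)) + (2 * s * (z ω * v ω * (e ω ^ 2 * η ω)) + (2 * (u ω * v ω * (e ω * η ω ^ 2))))))) P := iT6.add t7
  have t5 : Integrable (fun ω => 2 * s * (a ω * z ω * e ω) + (2 * (a ω * u ω * η ω) + (2 * (a ω * v ω * (e ω * η ω)) + (2 * s * (z ω * u ω * (e ω * η ω)) + (2 * s * (z ω * v ω * (e ω ^ 2 * η ω)) + (2 * (u ω * v ω * (e ω * η ω ^ 2)))))))) P := iT5.add t6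
  have t4 : Integrable (fun ω => v ω ^ 2 * (e ω ^ 2 * η ω ^ 2) + (2 * s * (a ω * z ω * e ω) + (2 * (a ω * u ω * η ω) + (2 * (a ω * v ω * (e ω * η ω)) + (2 * s * (z ω * u ω * (e ω * η ω)) + (2 * s * (z ω * v ω * (e ω ^ 2 * η ω)) + (2 * (u ω * v ω * (e ω * η ω ^ 2))))))))) P := iT4.add t5
  have t3 : Integrable (fun ω => u ω ^ 2 * η ω ^ 2 + (v ω ^ 2 * (e ω ^ 2 * η ω ^ 2) + (2 * s * (a ω * z ω * e ω) + (2 * (a ω * u ω * η ω) + (2 * (a ω * v ω * (e ω * η ω)) + (2 * s * (z ω * u ω * (e ω * η ω)) + (2 * s * (z ω * v ω * (e ω ^ 2 * η ω)) + (2 * (u ω * v ω * (e ω * η ω ^ 2)))))))))) P := iT3.add t4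
  have t2 : Integrable (fun ω => s ^ 2 * (z ω ^ 2 * e ω ^ 2) + (u ω ^ 2 * η ω ^ 2 + (v ω ^ 2 * (e ω ^ 2 * η ω ^ 2) + (2 * s * (a ω * z ω * e ω) + (2 * (a ω * u ω * η ω) + (2 * (a ω * v ω * (e ω * η ω)) + (2 * s * (z ω * u ω * (e ω * η ω)) + (2 * s * (z ω * v ω * (e ω ^ 2 * η ω)) + (2 * (u ω * v ω * (e ω * η ω ^ 2))))))))))) P := iT2.add t3
  rw [integral_add ia2 t2]
  rw [integral_add iT2 t3]
  rw [integral_add iT3 t4]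
  rw [integral_add iT4 t5]
  rw [integral_add iT5 t6]
  rw [integral_add iT6 t7]
  rw [integral_add iT7 t8]
  rw [integral_add iT8 t9]
  rw [integral_add iT9 iT10]
  simp only [integral_const_mul]
  rw [vT2, vT3, vT4, vT5, vT6, vT7, vT8, vT9, vT10, hs2]
  ring
end

section
/- Let c > 0 and let m, ξ, ζ be real numbers with ξ ≤ ζ. Then the equation y = m + c(y − ξ)⁻ − c(ζ − y)⁻ has a unique real solution, namely y = m + (c/(1+c))(m − ξ)⁻ − (c/(1+c))(ζ − m)⁻. Moreover, for this solution one has c(y − ξ)⁻ = (c/(1+c))(m − ξ)⁻ and c(ζ − y)⁻ = (c/(1+c))(ζ − m)⁻. -/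
/-- For a real number `x`, `x⁻` denotes the negative part `max (-x) 0`.
One-step algebraic identity underlying the passage from the explicit penalized
discrete equation to the explicit penalized discrete scheme. -/
theorem stmt_3 (c m ξ ζ : ℝ) (hc : 0 < c) (hξζ : ξ ≤ ζ) :
    (∀ y : ℝ,
      (y = m + c * max (-(y - ξ)) 0 - c * max (-(ζ - y)) 0 ↔
        y = m + c / (1 + c) * max (-(m - ξ)) 0 - c / (1 + c) * max (-(ζ - m)) 0)) ∧
    (c * max (-((m + c / (1 + c) * max (-(m - ξ)) 0 - c / (1 + c) * max (-(ζ - m)) 0) - ξ)) 0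
        = c / (1 + c) * max (-(m - ξ)) 0) ∧
    (c * max (-(ζ - (m + c / (1 + c) * max (-(m - ξ)) 0 - c / (1 + c) * max (-(ζ - m)) 0))) 0
        = c / (1 + c) * max (-(ζ - m)) 0) := by
  have h1c : (0:ℝ) < 1 + c := by linarith
  set a := max (-(m - ξ)) 0 with ha
  set b := max (-(ζ - m)) 0 with hb
  set y0 : ℝ := m + c / (1 + c) * a - c / (1 + c) * b with hy0
  have key2 : c * max (-(y0 - ξ)) 0 = c / (1 + c) * a := by
    rcases le_or_gt m ξ with h | h
    · have haa : a = ξ - m := by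
        rw [ha, max_eq_left (by linarith)]; ring
      have hbb : b = 0 := max_eq_right (by linarith)
      have hy : y0 - ξ = (m - ξ) / (1 + c) := by
        rw [hy0, haa, hbb]; field_simp; ring
      rw [hy, max_eq_left (by rw [le_neg, neg_zero]; exact div_nonpos_of_nonpos_of_nonneg (by linarith) (by linarith)), haa]
      field_simp; ring
    · have haa : a = 0 := max_eq_right (by linarith)
      rcases le_or_gt m ζ with h2 | h2
      · have hbb : b = 0 := max_eq_right (by linarith)
        have hy : y0 = m := by rw [hy0, haa, hbb]; ring
        rw [hy, haa, max_eq_right (by linarith)]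
        ring
      · have hbb : b = m - ζ := by
          rw [hb, max_eq_left (by linarith)]; ring
        have hy : y0 - ξ = (m + c * ζ) / (1 + c) - ξ := by
          rw [hy0, haa, hbb]; field_simp; ring
        have hnn : (0:ℝ) ≤ y0 - ξ := by
          rw [hy]
          rw [sub_nonneg, le_div_iff₀ h1c]
          nlinarith
        rw [max_eq_right (by linarith), haa]
        ring
  have key3 : c * max (-(ζ - y0)) 0 = c / (1 + c) * b := by
    rcases le_or_gt ζ m with h | h
    · have hbb : b = m - ζ := by
        rw [hb, max_eq_left (by linarith)]; ring
      have haa : a = 0 := max_eq_right (by linarith)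
      have hy : ζ - y0 = (ζ - m) / (1 + c) := by
        rw [hy0, haa, hbb]; field_simp; ring
      rw [hy, max_eq_left (by rw [le_neg, neg_zero]; exact div_nonpos_of_nonpos_of_nonneg (by linarith) (by linarith)), hbb]
      field_simp; ring
    · have hbb : b = 0 := max_eq_right (by linarith)
      rcases le_or_gt ξ m with h2 | h2
      · have haa : a = 0 := max_eq_right (by linarith)
        have hy : y0 = m := by rw [hy0, haa, hbb]; ring
        rw [hy, hbb, max_eq_right (by linarith)]
        ring
      · have haa : a = ξ - m := by
          rw [ha, max_eq_left (by linarith)]; ring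
        have hnn : (0:ℝ) ≤ ζ - y0 := by
          have hfr : c / (1 + c) ≤ 1 := by rw [div_le_one h1c]; linarith
          have hmul := mul_le_mul_of_nonneg_right hfr (by linarith : (0:ℝ) ≤ ξ - m)
          rw [hy0, haa, hbb]
          linarith
        rw [max_eq_right (by linarith), hbb]
        ring
  refine ⟨?_, key2, key3⟩
  intro y
  constructor
  · intro hy
    have hmono : StrictMono (fun y : ℝ => y - c * max (-(y - ξ)) 0 + c * max (-(ζ - y)) 0) := by
      intro y1 y2 hlt
      have h1 : c * max (-(y2 - ξ)) 0 ≤ c * max (-(y1 - ξ)) 0 := by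
        apply mul_le_mul_of_nonneg_left _ hc.le
        exact max_le_max (by linarith) le_rfl
      have h2 : c * max (-(ζ - y1)) 0 ≤ c * max (-(ζ - y2)) 0 := by
        apply mul_le_mul_of_nonneg_left _ hc.le
        exact max_le_max (by linarith) le_rfl
      simp only
      linarith
    have h1 : y - c * max (-(y - ξ)) 0 + c * max (-(ζ - y)) 0 = m := by linarith
    have h2 : y0 - c * max (-(y0 - ξ)) 0 + c * max (-(ζ - y0)) 0 = m := by
      rw [key2, key3, hy0]; ring
    exact hmono.injective (h1.trans h2.symm)
  · intro hy
    rw [hy, key2, key3]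
end

section
/- Let ξ ≤ ζ be real numbers, p > 0, δ > 0 and C_g ≥ 0 with δ·C_g < 1, and let h : ℝ → ℝ be Lipschitz with constant C_g. Then the map Θ : ℝ → ℝ defined by Θ(y) = y − δ·h(y) − pδ(y − ξ)⁻ + pδ(ζ − y)⁻ is strictly increasing and is a bijection from ℝ onto ℝ. -/
/-- Well-posedness of the one-step operator `Θ^{p,n}` whose inverse defines the
implicit penalized discrete scheme for doubly reflected BSDEs. Here `x⁻ = max (-x) 0`. -/
theorem stmt_4 (ξ ζ p δ Cg : ℝ) (hξζ : ξ ≤ ζ) (hp : 0 < p) (hδ : 0 < δ)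
    (hCg : 0 ≤ Cg) (hsmall : δ * Cg < 1)
    (h : ℝ → ℝ) (hlip : ∀ x y : ℝ, |h x - h y| ≤ Cg * |x - y|) :
    StrictMono (fun y : ℝ =>
        y - δ * h y - p * δ * max (-(y - ξ)) 0 + p * δ * max (-(ζ - y)) 0) ∧
    Function.Bijective (fun y : ℝ =>
        y - δ * h y - p * δ * max (-(y - ξ)) 0 + p * δ * max (-(ζ - y)) 0) := by
  set f : ℝ → ℝ := fun y : ℝ =>
      y - δ * h y - p * δ * max (-(y - ξ)) 0 + p * δ * max (-(ζ - y)) 0 with hf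
  have hcpos : 0 < 1 - δ * Cg := by linarith
  have key : ∀ a b : ℝ, a ≤ b → (1 - δ * Cg) * (b - a) ≤ f b - f a := by
    intro a b hab
    have h1 : h b - h a ≤ Cg * (b - a) := by
      have h0 := hlip b a
      rw [abs_of_nonneg (by linarith : (0:ℝ) ≤ b - a)] at h0
      exact le_trans (le_abs_self _) h0
    have h1' : δ * (h b - h a) ≤ δ * (Cg * (b - a)) :=
      mul_le_mul_of_nonneg_left h1 hδ.le
    have h2 : max (-(b - ξ)) 0 ≤ max (-(a - ξ)) 0 :=
      max_le_max (by linarith) le_rfl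
    have h3 : max (-(ζ - a)) 0 ≤ max (-(ζ - b)) 0 :=
      max_le_max (by linarith) le_rfl
    have hpδ : (0:ℝ) ≤ p * δ := by positivity
    have h2' := mul_le_mul_of_nonneg_left h2 hpδ
    have h3' := mul_le_mul_of_nonneg_left h3 hpδ
    simp only [hf]
    nlinarith [h1', h2', h3']
  have hmono : StrictMono f := by
    intro a b hab
    have := key a b hab.le
    have : 0 < (1 - δ * Cg) * (b - a) := mul_pos hcpos (by linarith)
    linarith [key a b hab.le]
  have hcont : Continuous f := by
    have hch : Continuous h := by
      have : LipschitzWith (Real.toNNReal Cg) h := by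
        apply LipschitzWith.of_dist_le_mul
        intro x y
        rw [Real.dist_eq, Real.dist_eq, Real.coe_toNNReal Cg hCg]
        exact hlip x y
      exact this.continuous
    simp only [hf]
    continuity
  have htop : Filter.Tendsto f Filter.atTop Filter.atTop := by
    apply Filter.tendsto_atTop_mono' _ _ (Filter.tendsto_atTop_add_const_left _ (f 0)
      (Filter.Tendsto.const_mul_atTop hcpos Filter.tendsto_id))
    filter_upwards [Filter.eventually_ge_atTop (0:ℝ)] with y hy
    have := key 0 y hy
    simp only [id_eq]
    linarith
  have hbot : Filter.Tendsto f Filter.atBot Filter.atBot := by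
    apply Filter.tendsto_atBot_mono' _ _ (Filter.tendsto_atBot_add_const_left _ (f 0)
      (Filter.Tendsto.const_mul_atBot hcpos Filter.tendsto_id))
    filter_upwards [Filter.eventually_le_atBot (0:ℝ)] with y hy
    have := key y 0 hy
    simp only [id_eq]
    linarith
  exact ⟨hmono, hmono.injective, hcont.surjective htop hbot⟩
end

section
/- For every 0 ≤ j ≤ n−1, almost surely ā_j = pδ(ȳ_j − ξ_j)⁻ and k̄_j = pδ(ζ_j − ȳ_j)⁻; consequently the explicit scheme satisfies, for every 0 ≤ j ≤ n−1, ȳ_{j+1} = ȳ_j − δ·g(j, E[ȳ_{j+1} | F_j], z̄_j, ū_j) − ā_j + k̄_j + √δ·z̄_j·e_{j+1} + ū_j·η_{j+1} + v̄_j·μ_{j+1} almost surely. -/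
open MeasureTheory ProbabilityTheory MeasurableSpace Set Filter Topology

lemma penalty_eq (pd x w : ℝ) (hpd : 0 < pd) (hxw : 0 ≤ x + w) :
    pd * max (-(x + pd / (1 + pd) * max (-x) 0 - pd / (1 + pd) * max (-w) 0)) 0
      = pd / (1 + pd) * max (-x) 0 := by
  have h1 : (0:ℝ) < 1 + pd := by linarith
  have hα : 0 < pd / (1 + pd) := div_pos hpd h1
  have hα1 : pd / (1 + pd) ≤ 1 := by rw [div_le_one h1]; linarith
  rcases le_or_gt 0 x with hx | hx
  · rw [max_eq_right (by linarith : -x ≤ (0:ℝ))]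
    rcases le_or_gt 0 w with hw | hw
    · rw [max_eq_right (by linarith : -w ≤ (0:ℝ))]
      rw [max_eq_right (by linarith : -(x + pd / (1 + pd) * 0 - pd / (1 + pd) * 0) ≤ 0)]
      ring
    · rw [max_eq_left (by linarith : (0:ℝ) ≤ -w)]
      have key : (0:ℝ) ≤ (1 - pd / (1 + pd)) * (-w) := by
        apply mul_nonneg <;> linarith
      rw [max_eq_right (by nlinarith : -(x + pd / (1 + pd) * 0 - pd / (1 + pd) * -w) ≤ 0)]
      ring
  · have hw : 0 < w := by linarith
    rw [max_eq_left (by linarith : (0:ℝ) ≤ -x), max_eq_right (by linarith : -w ≤ (0:ℝ))]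
    have key : (0:ℝ) ≤ (1 - pd / (1 + pd)) * (-x) := by
      apply mul_nonneg <;> linarith
    rw [max_eq_left (by nlinarith : (0:ℝ) ≤ -(x + pd / (1 + pd) * -x - pd / (1 + pd) * 0))]
    field_simp
    ring

lemma measurable_g_comp {α : Type*} {mα : MeasurableSpace α}
    (G : α → ℝ → ℝ → ℝ → ℝ) (L : ℝ) (hL : 0 ≤ L)
    (hmeas : ∀ a b c : ℝ, Measurable fun ω => G ω a b c)
    (hlip : ∀ ω a b c a' b' c', |G ω a b c - G ω a' b' c'| ≤ L * (|a - a'| + |b - b'| + |c - c'|))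
    {A B C : α → ℝ} (hA : Measurable A) (hB : Measurable B) (hC : Measurable C) :
    Measurable fun ω => G ω (A ω) (B ω) (C ω) := by
  have hvm : Measurable (fun ω => (A ω, B ω, C ω) : α → ℝ × ℝ × ℝ) :=
    hA.prodMk (hB.prodMk hC)
  have hcont : ∀ ω, Continuous fun x : ℝ × ℝ × ℝ => G ω x.1 x.2.1 x.2.2 := by
    intro ω
    refine (LipschitzWith.of_dist_le_mul (K := ⟨3 * L, by positivity⟩) ?_).continuous
    intro x y
    have h1 : |x.1 - y.1| ≤ dist x y := by
      rw [Prod.dist_eq]; exact le_trans (le_of_eq (Real.dist_eq _ _).symm) (le_max_left _ _)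
    have h2 : |x.2.1 - y.2.1| ≤ dist x y := by
      rw [Prod.dist_eq, Prod.dist_eq]
      refine le_trans (le_of_eq (Real.dist_eq _ _).symm) (le_trans (le_max_left _ _) (le_max_right _ _))
    have h3 : |x.2.2 - y.2.2| ≤ dist x y := by
      rw [Prod.dist_eq, Prod.dist_eq]
      refine le_trans (le_of_eq (Real.dist_eq _ _).symm) (le_trans (le_max_right _ _) (le_max_right _ _))
    have := hlip ω x.1 x.2.1 x.2.2 y.1 y.2.1 y.2.2
    have hd : (0:ℝ) ≤ dist x y := dist_nonneg
    rw [Real.dist_eq]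
    show _ ≤ 3 * L * dist x y
    nlinarith
  set v : α → ℝ × ℝ × ℝ := fun ω => (A ω, B ω, C ω) with hv
  have hvm' : Measurable v := hvm
  refine measurable_of_tendsto_metrizable'
    (f := fun k ω => G ω ((SimpleFunc.approxOn v hvm' Set.univ (0,0,0) (Set.mem_univ _) k) ω).1
      ((SimpleFunc.approxOn v hvm' Set.univ (0,0,0) (Set.mem_univ _) k) ω).2.1
      ((SimpleFunc.approxOn v hvm' Set.univ (0,0,0) (Set.mem_univ _) k) ω).2.2)
    Filter.atTop (fun k => ?_) ?_
  · exact SimpleFunc.measurable_bind _ (fun (x : ℝ × ℝ × ℝ) ω => G ω x.1 x.2.1 x.2.2)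
      (fun x => hmeas x.1 x.2.1 x.2.2)
  · rw [tendsto_pi_nhds]
    intro ω
    have hx : Tendsto (fun k => (SimpleFunc.approxOn v hvm' Set.univ (0,0,0) (Set.mem_univ _) k) ω)
        atTop (𝓝 (v ω)) :=
      SimpleFunc.tendsto_approxOn hvm' (Set.mem_univ _) (by simp)
    exact ((hcont ω).tendsto (v ω)).comp hx

lemma my_indep_mono {Ω : Type*} {m0 : MeasurableSpace Ω} {μ : Measure Ω}
    {m₁ m₂ m₁' m₂' : MeasurableSpace Ω} (h : Indep m₁ m₂ μ)
    (h1 : m₁' ≤ m₁) (h2 : m₂' ≤ m₂) : Indep m₁' m₂' μ := by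
  rw [Indep_iff] at h ⊢
  exact fun t1 t2 ht1 ht2 => h t1 t2 (h1 _ ht1) (h2 _ ht2)

lemma repr_lemma {Ω : Type*} [m0 : MeasurableSpace Ω] (P : Measure Ω) [IsProbabilityMeasure P]
    (F : MeasurableSpace Ω) (hF : F ≤ m0)
    (κ : ℝ) (hκ0 : 0 < κ) (hκ1 : κ < 1)
    (e η : Ω → ℝ) (he : Measurable[m0] e) (hη : Measurable[m0] η)
    (hindep : Indep F (MeasurableSpace.comap e inferInstance ⊔ MeasurableSpace.comap η inferInstance) P)
    (heη : IndepFun e η P)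
    (he1 : P {ω | e ω = 1} = 1 / 2) (hem1 : P {ω | e ω = -1} = 1 / 2)
    (hη1 : P {ω | η ω = κ - 1} = ENNReal.ofReal κ) (hη2 : P {ω | η ω = κ} = ENNReal.ofReal (1 - κ))
    (Y : Ω → ℝ) (hYint : Integrable Y P)
    (hYmeas : StronglyMeasurable[F ⊔ (MeasurableSpace.comap e inferInstance ⊔ MeasurableSpace.comap η inferInstance)] Y) :
    ∀ᵐ ω ∂P, Y ω = (P[Y|F]) ω + (P[fun ω' => Y ω' * e ω'|F]) ω * e ω
      + (κ * (1 - κ))⁻¹ * (P[fun ω' => Y ω' * η ω'|F]) ω * η ω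
      + (κ * (1 - κ))⁻¹ * (P[fun ω' => Y ω' * (e ω' * η ω')|F]) ω * (e ω * η ω) := by
  set m₂ : MeasurableSpace Ω :=
    MeasurableSpace.comap e inferInstance ⊔ MeasurableSpace.comap η inferInstance with hm₂def
  have hm₂ : m₂ ≤ m0 := sup_le he.comap_le hη.comap_le
  set G : MeasurableSpace Ω := F ⊔ m₂ with hGdef
  have hG : G ≤ m0 := sup_le hF hm₂
  letI inst0 : MeasurableSpace Ω := m0
  have hem₂ : Measurable[m₂] e :=
    Measurable.mono (measurable_iff_comap_le.mpr le_rfl) le_sup_left le_rfl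
  have hηm₂ : Measurable[m₂] η :=
    Measurable.mono (measurable_iff_comap_le.mpr le_rfl) le_sup_right le_rfl
  -- events
  have hS1 : MeasurableSet[m0] {ω | e ω = 1} := he (measurableSet_singleton 1)
  have hS2 : MeasurableSet[m0] {ω | e ω = -1} := he (measurableSet_singleton (-1))
  have hB1 : MeasurableSet[m0] {ω | η ω = κ - 1} := hη (measurableSet_singleton (κ - 1))
  have hB2 : MeasurableSet[m0] {ω | η ω = κ} := hη (measurableSet_singleton κ)
  have hSd : Disjoint {ω | e ω = 1} {ω | e ω = -1} := by
    rw [Set.disjoint_left]; intro ω h1 h2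
    simp only [Set.mem_setOf_eq] at h1 h2; rw [h1] at h2; norm_num at h2
  have hBd : Disjoint {ω | η ω = κ - 1} {ω | η ω = κ} := by
    rw [Set.disjoint_left]; intro ω h1 h2
    simp only [Set.mem_setOf_eq] at h1 h2; rw [h1] at h2; linarith
  have hecover : ∀ᵐ ω ∂P, e ω = 1 ∨ e ω = -1 := by
    have hu : P ({ω | e ω = 1} ∪ {ω | e ω = -1}) = 1 := by
      rw [measure_union hSd hS2, he1, hem1, ENNReal.div_add_div_same, one_add_one_eq_two, ENNReal.div_self two_ne_zero ENNReal.ofNat_ne_top]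
    rw [ae_iff]
    have heq : {ω | ¬(e ω = 1 ∨ e ω = -1)} = ({ω | e ω = 1} ∪ {ω | e ω = -1})ᶜ := by
      ext ω; simp [not_or]
    rw [heq, measure_compl (hS1.union hS2) (measure_ne_top _ _), hu, measure_univ]
    simp
  have hηcover : ∀ᵐ ω ∂P, η ω = κ - 1 ∨ η ω = κ := by
    have hu : P ({ω | η ω = κ - 1} ∪ {ω | η ω = κ}) = 1 := by
      rw [measure_union hBd hB2, hη1, hη2, ← ENNReal.ofReal_add (by linarith) (by linarith)]
      norm_num
    rw [ae_iff]
    have heq : {ω | ¬(η ω = κ - 1 ∨ η ω = κ)} = ({ω | η ω = κ - 1} ∪ {ω | η ω = κ})ᶜ := by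
      ext ω; simp [not_or]
    rw [heq, measure_compl (hB1.union hB2) (measure_ne_top _ _), hu, measure_univ]
    simp
  have hebd : ∀ᵐ ω ∂P, |e ω| ≤ 1 := by
    filter_upwards [hecover] with ω h; rcases h with h | h <;> rw [h] <;> norm_num
  have hηbd : ∀ᵐ ω ∂P, |η ω| ≤ 1 := by
    filter_upwards [hηcover] with ω h; rcases h with h | h <;> rw [h, abs_le] <;>
      constructor <;> linarith
  -- integrability of bounded measurable functions
  have int_bdd : ∀ ψ : Ω → ℝ, AEStronglyMeasurable ψ P → (∀ᵐ ω ∂P, |ψ ω| ≤ 1) →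
      Integrable ψ P := by
    intro ψ hmψ hb
    refine Integrable.mono' (integrable_const 1) hmψ ?_
    filter_upwards [hb] with ω h; simpa [Real.norm_eq_abs] using h
  have intmul : ∀ h : Ω → ℝ, Integrable h P → ∀ ψ : Ω → ℝ, AEStronglyMeasurable ψ P →
      (∀ᵐ ω ∂P, |ψ ω| ≤ 1) → Integrable (fun ω => h ω * ψ ω) P := by
    intro h hh ψ hψ hb
    refine (hh.bdd_mul (c := 1) hψ ?_).congr (Eventually.of_forall fun ω => mul_comm _ _)
    filter_upwards [hb] with ω h; simpa [Real.norm_eq_abs] using h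
  -- two-valued integrals
  have int_two : ∀ (f : Ω → ℝ) (a b : ℝ) (S1 S2 : Set Ω), MeasurableSet[m0] S1 →
      MeasurableSet[m0] S2 →
      Disjoint S1 S2 → (∀ᵐ ω ∂P, ω ∈ S1 ∪ S2) → (∀ ω ∈ S1, f ω = a) → (∀ ω ∈ S2, f ω = b) →
      ∫ ω, f ω ∂P = a * (P S1).toReal + b * (P S2).toReal := by
    intro f a b S1 S2 h1 h2 hd hcov hf1 hf2
    have hfeq : f =ᵐ[P] fun ω => S1.indicator (fun _ => a) ω + S2.indicator (fun _ => b) ω := by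
      filter_upwards [hcov] with ω hω
      rcases hω with hω | hω
      · rw [Set.indicator_of_mem hω, Set.indicator_of_notMem (Set.disjoint_left.mp hd hω),
          hf1 ω hω]; ring
      · rw [Set.indicator_of_notMem (Set.disjoint_right.mp hd hω), Set.indicator_of_mem hω,
          hf2 ω hω]; ring
    rw [integral_congr_ae hfeq,
      integral_add ((integrable_const a).indicator h1) ((integrable_const b).indicator h2),
      integral_indicator_const (μ := P) a h1, integral_indicator_const (μ := P) b h2]
    simp [smul_eq_mul, measureReal_def]; ring
  -- moments
  have int_e : Integrable e P := int_bdd e he.aestronglyMeasurable hebd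
  have int_η : Integrable η P := int_bdd η hη.aestronglyMeasurable hηbd
  have heηbd : ∀ᵐ ω ∂P, |e ω * η ω| ≤ 1 := by
    filter_upwards [hebd, hηbd] with ω h1 h2
    rw [abs_mul]
    nlinarith [abs_nonneg (e ω), abs_nonneg (η ω)]
  have hη2bd : ∀ᵐ ω ∂P, |η ω * η ω| ≤ 1 := by
    filter_upwards [hηbd] with ω h2
    rw [abs_mul]
    nlinarith [abs_nonneg (η ω)]
  have int_η2 : Integrable (fun ω => η ω * η ω) P :=
    int_bdd _ ((hη.mul hη).aestronglyMeasurable) hη2bd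
  have Ee : ∫ ω, e ω ∂P = 0 := by
    rw [int_two e 1 (-1) {ω | e ω = 1} {ω | e ω = -1} hS1 hS2 hSd
      (by filter_upwards [hecover] with ω h; exact h) (fun ω h => h) (fun ω h => h), he1, hem1]
    norm_num
  have Eη : ∫ ω, η ω ∂P = 0 := by
    rw [int_two η (κ - 1) κ {ω | η ω = κ - 1} {ω | η ω = κ} hB1 hB2 hBd
      (by filter_upwards [hηcover] with ω h; exact h) (fun ω h => h) (fun ω h => h), hη1, hη2,
      ENNReal.toReal_ofReal hκ0.le, ENNReal.toReal_ofReal (by linarith : (0:ℝ) ≤ 1 - κ)]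
    ring
  have Eη2 : ∫ ω, η ω * η ω ∂P = κ * (1 - κ) := by
    rw [int_two (fun ω => η ω * η ω) ((κ - 1) * (κ - 1)) (κ * κ) {ω | η ω = κ - 1} {ω | η ω = κ}
      hB1 hB2 hBd (by filter_upwards [hηcover] with ω h; exact h)
      (fun ω h => by simp only [Set.mem_setOf_eq] at h; show η ω * η ω = _; rw [h])
      (fun ω h => by simp only [Set.mem_setOf_eq] at h; show η ω * η ω = _; rw [h]), hη1, hη2,
      ENNReal.toReal_ofReal hκ0.le, ENNReal.toReal_ofReal (by linarith : (0:ℝ) ≤ 1 - κ)]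
    ring
  have Ee2 : ∫ ω, e ω * e ω ∂P = 1 := by
    rw [integral_congr_ae (g := fun _ => (1:ℝ))
      (by filter_upwards [hecover] with ω h; rcases h with h | h <;> rw [h] <;> norm_num)]
    simp
  have Eeη : ∫ ω, e ω * η ω ∂P = 0 := by
    have h := heη.integral_mul_eq_mul_integral int_e.1 int_η.1
    have h2 : ∫ ω, e ω * η ω ∂P = integral P (e * η) := rfl
    rw [h2, h, Ee, Eη]; ring
  have Eeη2 : ∫ ω, e ω * (η ω * η ω) ∂P = 0 := by
    have hind2 : IndepFun e (fun ω => η ω * η ω) P := by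
      have h2 := heη.comp (measurable_id (α := ℝ)) ((measurable_id (α := ℝ)).mul measurable_id)
      exact h2
    have h := hind2.integral_mul_eq_mul_integral int_e.1 int_η2.1
    have h2 : ∫ ω, e ω * (η ω * η ω) ∂P = integral P (e * fun ω => η ω * η ω) := rfl
    rw [h2, h, Ee]; ring
  -- independence: product of F-measurable and m₂-measurable integrates to product
  haveI : SigmaFinite (P.trim hF) := by infer_instance
  haveI : SigmaFinite (P.trim hG) := by infer_instance
  have key_int : ∀ h : Ω → ℝ, StronglyMeasurable[F] h → Integrable h P →
      ∀ ψ : Ω → ℝ, Measurable[m₂] ψ → (∀ᵐ ω ∂P, |ψ ω| ≤ 1) →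
      ∀ A : Set Ω, MeasurableSet[F] A →
      ∫ ω in A, h ω * ψ ω ∂P = (∫ ω in A, h ω ∂P) * ∫ ω, ψ ω ∂P := by
    intro h hhm hhint ψ hψm hψb A hA
    have hAm0 : MeasurableSet[m0] A := hF _ hA
    have hψm0 : Measurable[m0] ψ := hψm.mono hm₂ le_rfl
    have hψint : Integrable ψ P := int_bdd ψ hψm0.aestronglyMeasurable hψb
    have hhind : Measurable[F] (A.indicator h) := (hhm.measurable).indicator hA
    have hind : IndepFun (A.indicator h) ψ P := by
      rw [IndepFun_iff_Indep]
      exact my_indep_mono hindep hhind.comap_le hψm.comap_le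
    have h1 : Integrable (A.indicator h) P := hhint.indicator hAm0
    have hmain := hind.integral_mul_eq_mul_integral h1.1 hψint.1
    simp only [Pi.mul_apply] at hmain
    have e2 : ∀ ω, A.indicator h ω * ψ ω = A.indicator (fun ω' => h ω' * ψ ω') ω := by
      intro ω; by_cases hω : ω ∈ A
      · rw [Set.indicator_of_mem hω, Set.indicator_of_mem hω]
      · rw [Set.indicator_of_notMem hω, Set.indicator_of_notMem hω, zero_mul]
    calc ∫ ω in A, h ω * ψ ω ∂P
        = ∫ ω, A.indicator (fun ω' => h ω' * ψ ω') ω ∂P := (integral_indicator hAm0).symm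
      _ = ∫ ω, A.indicator h ω * ψ ω ∂P := by
          exact integral_congr_ae (Eventually.of_forall fun ω => (e2 ω).symm)
      _ = (∫ ω, A.indicator h ω ∂P) * ∫ ω, ψ ω ∂P := hmain
      _ = (∫ ω in A, h ω ∂P) * ∫ ω, ψ ω ∂P := by rw [integral_indicator hAm0]
  -- conditional expectations
  set σ2 : ℝ := κ * (1 - κ) with hσ2def
  have hσ2pos : 0 < σ2 := mul_pos hκ0 (by linarith)
  have hσ2 : σ2 ≠ 0 := ne_of_gt hσ2pos
  set a : Ω → ℝ := P[Y|F] with hadef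
  set b : Ω → ℝ := P[fun ω' => Y ω' * e ω'|F] with hbdef
  set c : Ω → ℝ := P[fun ω' => Y ω' * η ω'|F] with hcdef
  set d : Ω → ℝ := P[fun ω' => Y ω' * (e ω' * η ω')|F] with hddef
  have hai : Integrable a P := integrable_condExp
  have hbi : Integrable b P := integrable_condExp
  have hci : Integrable c P := integrable_condExp
  have hdi : Integrable d P := integrable_condExp
  have ham : StronglyMeasurable[F] a := stronglyMeasurable_condExp
  have hbm : StronglyMeasurable[F] b := stronglyMeasurable_condExp
  have hcm : StronglyMeasurable[F] c := stronglyMeasurable_condExp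
  have hdm : StronglyMeasurable[F] d := stronglyMeasurable_condExp
  set W : Ω → ℝ := fun ω =>
    a ω + b ω * e ω + σ2⁻¹ * c ω * η ω + σ2⁻¹ * d ω * (e ω * η ω) with hWdef
  have intYe : Integrable (fun ω => Y ω * e ω) P := intmul Y hYint e he.aestronglyMeasurable hebd
  have intYη : Integrable (fun ω => Y ω * η ω) P := intmul Y hYint η hη.aestronglyMeasurable hηbd
  have intYeη : Integrable (fun ω => Y ω * (e ω * η ω)) P :=
    intmul Y hYint _ ((he.mul hη).aestronglyMeasurable) heηbd
  have iW1 : Integrable (fun ω => b ω * e ω) P := intmul b hbi e he.aestronglyMeasurable hebd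
  have iW2 : Integrable (fun ω => σ2⁻¹ * c ω * η ω) P :=
    intmul _ (hci.const_mul σ2⁻¹) η hη.aestronglyMeasurable hηbd
  have iW3 : Integrable (fun ω => σ2⁻¹ * d ω * (e ω * η ω)) P :=
    intmul _ (hdi.const_mul σ2⁻¹) _ ((he.mul hη).aestronglyMeasurable) heηbd
  have intW : Integrable W P := by
    rw [hWdef]
    exact ((hai.add iW1).add iW2).add iW3
  -- splitting of ∫_A W ψ
  have split : ∀ A : Set Ω, MeasurableSet[F] A → ∀ ψ : Ω → ℝ, Measurable[m₂] ψ →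
      (∀ᵐ ω ∂P, |ψ ω| ≤ 1) →
      ∫ ω in A, W ω * ψ ω ∂P
        = (∫ ω in A, a ω ∂P) * (∫ ω, ψ ω ∂P) + (∫ ω in A, b ω ∂P) * (∫ ω, e ω * ψ ω ∂P)
          + (σ2⁻¹ * ∫ ω in A, c ω ∂P) * (∫ ω, η ω * ψ ω ∂P)
          + (σ2⁻¹ * ∫ ω in A, d ω ∂P) * (∫ ω, e ω * η ω * ψ ω ∂P) := by
    intro A hA ψ hψm hψb
    have hψm0 : Measurable[m0] ψ := hψm.mono hm₂ le_rfl
    have heψb : ∀ᵐ ω ∂P, |e ω * ψ ω| ≤ 1 := by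
      filter_upwards [hebd, hψb] with ω h1 h2
      rw [abs_mul]; nlinarith [abs_nonneg (e ω), abs_nonneg (ψ ω)]
    have hηψb : ∀ᵐ ω ∂P, |η ω * ψ ω| ≤ 1 := by
      filter_upwards [hηbd, hψb] with ω h1 h2
      rw [abs_mul]; nlinarith [abs_nonneg (η ω), abs_nonneg (ψ ω)]
    have heηψb : ∀ᵐ ω ∂P, |e ω * η ω * ψ ω| ≤ 1 := by
      filter_upwards [heηbd, hψb] with ω h1 h2
      rw [abs_mul]; nlinarith [abs_nonneg (e ω * η ω), abs_nonneg (ψ ω)]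
    have k1 := key_int a ham hai ψ hψm hψb A hA
    have k2 := key_int b hbm hbi (fun ω => e ω * ψ ω) (hem₂.mul hψm) heψb A hA
    have k3 := key_int (fun ω => σ2⁻¹ * c ω) (hcm.const_mul σ2⁻¹) (hci.const_mul σ2⁻¹)
      (fun ω => η ω * ψ ω) (hηm₂.mul hψm) hηψb A hA
    have k4 := key_int (fun ω => σ2⁻¹ * d ω) (hdm.const_mul σ2⁻¹) (hdi.const_mul σ2⁻¹)
      (fun ω => e ω * η ω * ψ ω) ((hem₂.mul hηm₂).mul hψm) heηψb A hA
    have expand : ∀ ω, W ω * ψ ω = a ω * ψ ω + b ω * (e ω * ψ ω)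
        + (σ2⁻¹ * c ω) * (η ω * ψ ω) + (σ2⁻¹ * d ω) * (e ω * η ω * ψ ω) := by
      intro ω; rw [hWdef]; ring
    have j0 : Integrable (fun ω => a ω * ψ ω) P :=
      intmul a hai ψ hψm0.aestronglyMeasurable hψb
    have j1 : Integrable (fun ω => b ω * (e ω * ψ ω)) P :=
      intmul b hbi _ ((he.mul hψm0).aestronglyMeasurable) heψb
    have j2 : Integrable (fun ω => (σ2⁻¹ * c ω) * (η ω * ψ ω)) P :=
      intmul _ (hci.const_mul σ2⁻¹) _ ((hη.mul hψm0).aestronglyMeasurable) hηψb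
    have j3 : Integrable (fun ω => (σ2⁻¹ * d ω) * (e ω * η ω * ψ ω)) P :=
      intmul _ (hdi.const_mul σ2⁻¹) _ (((he.mul hη).mul hψm0).aestronglyMeasurable) heηψb
    have j01 : Integrable (fun ω => a ω * ψ ω + b ω * (e ω * ψ ω)) P := j0.add j1
    have j012 : Integrable (fun ω => a ω * ψ ω + b ω * (e ω * ψ ω)
        + (σ2⁻¹ * c ω) * (η ω * ψ ω)) P := j01.add j2
    rw [integral_congr_ae (ae_restrict_of_ae (Eventually.of_forall expand)),
      integral_add j012.integrableOn j3.integrableOn,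
      integral_add j01.integrableOn j2.integrableOn,
      integral_add j0.integrableOn j1.integrableOn, k1, k2, k3, k4,
      integral_const_mul, integral_const_mul]
  -- the four basic identities
  have I1 : ∀ A : Set Ω, MeasurableSet[F] A → ∫ ω in A, Y ω ∂P = ∫ ω in A, W ω ∂P := by
    intro A hA
    have h0 := split A hA (fun _ => 1) measurable_const (by filter_upwards with ω; norm_num)
    simp only [mul_one] at h0
    rw [Ee, Eη, Eeη, integral_const] at h0
    rw [← setIntegral_condExp hF hYint hA, ← hadef, h0]
    simp [measure_univ]
  have I2 : ∀ A : Set Ω, MeasurableSet[F] A →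
      ∫ ω in A, Y ω * e ω ∂P = ∫ ω in A, W ω * e ω ∂P := by
    intro A hA
    have h0 := split A hA e hem₂ hebd
    have Eηe : ∫ ω, η ω * e ω ∂P = 0 := by
      rw [integral_congr_ae (g := fun ω => e ω * η ω)
        (Eventually.of_forall fun ω => mul_comm _ _), Eeη]
    have Eeηe : ∫ ω, e ω * η ω * e ω ∂P = 0 := by
      rw [integral_congr_ae (g := η)
        (by filter_upwards [hecover] with ω h; rcases h with h | h <;> rw [h] <;> ring)]
      exact Eη
    rw [h0, Ee, Ee2, Eηe, Eeηe, ← setIntegral_condExp hF intYe hA, ← hbdef]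
    ring
  have I3 : ∀ A : Set Ω, MeasurableSet[F] A →
      ∫ ω in A, Y ω * η ω ∂P = ∫ ω in A, W ω * η ω ∂P := by
    intro A hA
    have h0 := split A hA η hηm₂ hηbd
    have Eeηη : ∫ ω, e ω * η ω * η ω ∂P = 0 := by
      rw [integral_congr_ae (g := fun ω => e ω * (η ω * η ω))
        (Eventually.of_forall fun ω => by ring), Eeη2]
    rw [h0, Eη, Eeη, Eη2, Eeηη, ← setIntegral_condExp hF intYη hA, ← hcdef]
    field_simp
    ring
  have I4 : ∀ A : Set Ω, MeasurableSet[F] A →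
      ∫ ω in A, Y ω * (e ω * η ω) ∂P = ∫ ω in A, W ω * (e ω * η ω) ∂P := by
    intro A hA
    have h0 := split A hA (fun ω => e ω * η ω) (hem₂.mul hηm₂) heηbd
    have E1 : ∫ ω, e ω * (e ω * η ω) ∂P = 0 := by
      rw [integral_congr_ae (g := η)
        (by filter_upwards [hecover] with ω h; rcases h with h | h <;> rw [h] <;> ring)]
      exact Eη
    have E2 : ∫ ω, η ω * (e ω * η ω) ∂P = 0 := by
      rw [integral_congr_ae (g := fun ω => e ω * (η ω * η ω))
        (Eventually.of_forall fun ω => by ring), Eeη2]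
    have E3 : ∫ ω, e ω * η ω * (e ω * η ω) ∂P = σ2 := by
      rw [integral_congr_ae (g := fun ω => η ω * η ω)
        (by filter_upwards [hecover] with ω h; rcases h with h | h <;> rw [h] <;> ring)]
      exact Eη2
    rw [h0, Eeη, E1, E2, E3, ← setIntegral_condExp hF intYeη hA, ← hddef]
    field_simp
    ring
  -- master identity for affine test functions
  have master : ∀ A : Set Ω, MeasurableSet[F] A → ∀ c₀ c₁ c₂ c₃ : ℝ,
      ∫ ω in A, Y ω * (c₀ + c₁ * e ω + c₂ * η ω + c₃ * (e ω * η ω)) ∂P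
        = ∫ ω in A, W ω * (c₀ + c₁ * e ω + c₂ * η ω + c₃ * (e ω * η ω)) ∂P := by
    intro A hA c₀ c₁ c₂ c₃
    have expand : ∀ (f : Ω → ℝ), Integrable f P →
        Integrable (fun ω => f ω * e ω) P → Integrable (fun ω => f ω * η ω) P →
        Integrable (fun ω => f ω * (e ω * η ω)) P →
        ∫ ω in A, f ω * (c₀ + c₁ * e ω + c₂ * η ω + c₃ * (e ω * η ω)) ∂P
          = c₀ * ∫ ω in A, f ω ∂P + c₁ * ∫ ω in A, f ω * e ω ∂P
            + c₂ * ∫ ω in A, f ω * η ω ∂P + c₃ * ∫ ω in A, f ω * (e ω * η ω) ∂P := by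
      intro f hf if1 if2 if3
      have e1 : ∀ ω, f ω * (c₀ + c₁ * e ω + c₂ * η ω + c₃ * (e ω * η ω))
          = c₀ * f ω + c₁ * (f ω * e ω) + (c₂ * (f ω * η ω) + c₃ * (f ω * (e ω * η ω))) :=
        fun ω => by ring
      have p0 : Integrable (fun ω => c₀ * f ω) P := hf.const_mul c₀
      have p1 : Integrable (fun ω => c₁ * (f ω * e ω)) P := if1.const_mul c₁
      have p2 : Integrable (fun ω => c₂ * (f ω * η ω)) P := if2.const_mul c₂
      have p3 : Integrable (fun ω => c₃ * (f ω * (e ω * η ω))) P := if3.const_mul c₃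
      have p01 : Integrable (fun ω => c₀ * f ω + c₁ * (f ω * e ω)) P := p0.add p1
      have p23 : Integrable (fun ω => c₂ * (f ω * η ω) + c₃ * (f ω * (e ω * η ω))) P := p2.add p3
      rw [integral_congr_ae (ae_restrict_of_ae (Eventually.of_forall e1)),
        integral_add p01.integrableOn p23.integrableOn,
        integral_add p0.integrableOn p1.integrableOn,
        integral_add p2.integrableOn p3.integrableOn,
        integral_const_mul, integral_const_mul, integral_const_mul, integral_const_mul]
      ring
    have intWe : Integrable (fun ω => W ω * e ω) P := intmul W intW e he.aestronglyMeasurable hebd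
    have intWη : Integrable (fun ω => W ω * η ω) P := intmul W intW η hη.aestronglyMeasurable hηbd
    have intWeη : Integrable (fun ω => W ω * (e ω * η ω)) P :=
      intmul W intW _ ((he.mul hη).aestronglyMeasurable) heηbd
    rw [expand Y hYint intYe intYη intYeη, expand W intW intWe intWη intWeη,
      I1 A hA, I2 A hA, I3 A hA, I4 A hA]
  -- the π-system of rectangles
  have htotal : ∫ ω, Y ω ∂P = ∫ ω, W ω ∂P := by
    have h := I1 Set.univ MeasurableSet.univ
    rwa [setIntegral_univ, setIntegral_univ] at h
  have hm₂eq : m₂ = MeasurableSpace.comap (fun ω => (e ω, η ω)) inferInstance := by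
    have h1 : (inferInstance : MeasurableSpace (ℝ × ℝ))
        = MeasurableSpace.comap Prod.fst inferInstance
          ⊔ MeasurableSpace.comap Prod.snd inferInstance := rfl
    rw [h1, MeasurableSpace.comap_sup, MeasurableSpace.comap_comp, MeasurableSpace.comap_comp]
    rfl
  set π : Set (Set Ω) :=
    {s | ∃ A B : Set Ω, MeasurableSet[F] A ∧ MeasurableSet[m₂] B ∧ s = A ∩ B} with hπdef
  have hπ : IsPiSystem π := by
    rintro s ⟨A, B, hA, hB, rfl⟩ t ⟨A', B', hA', hB', rfl⟩ _
    refine ⟨A ∩ A', B ∩ B', hA.inter hA', hB.inter hB', ?_⟩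
    ext ω; simp only [Set.mem_inter_iff]; tauto
  have hgen : G = MeasurableSpace.generateFrom π := by
    refine le_antisymm (sup_le ?_ ?_) (MeasurableSpace.generateFrom_le ?_)
    · intro s hs
      exact MeasurableSpace.measurableSet_generateFrom
        ⟨s, Set.univ, hs, MeasurableSet.univ, (Set.inter_univ s).symm⟩
    · intro s hs
      exact MeasurableSpace.measurableSet_generateFrom
        ⟨Set.univ, s, MeasurableSet.univ, hs, (Set.univ_inter s).symm⟩
    · rintro s ⟨A, B, hA, hB, rfl⟩
      exact MeasurableSet.inter ((le_sup_left : F ≤ G) _ hA) ((le_sup_right : m₂ ≤ G) _ hB)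
  -- the basic rectangle case
  have hbasic : ∀ s ∈ π, ∫ ω in s, Y ω ∂P = ∫ ω in s, W ω ∂P := by
    rintro s ⟨A, B, hA, hB, rfl⟩
    have hBm0 : MeasurableSet[m0] B := hm₂ _ hB
    rw [hm₂eq] at hB
    obtain ⟨B₂, hB₂, hBpre⟩ := hB
    classical
    set v11 : ℝ := if ((1:ℝ), κ - 1) ∈ B₂ then 1 else 0 with hv11
    set v12 : ℝ := if ((1:ℝ), κ) ∈ B₂ then 1 else 0 with hv12
    set v21 : ℝ := if ((-1:ℝ), κ - 1) ∈ B₂ then 1 else 0 with hv21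
    set v22 : ℝ := if ((-1:ℝ), κ) ∈ B₂ then 1 else 0 with hv22
    set c₀ : ℝ := (κ * (v11 + v21) + (1 - κ) * (v12 + v22)) / 2 with hc₀
    set c₁ : ℝ := (κ * (v11 - v21) + (1 - κ) * (v12 - v22)) / 2 with hc₁
    set c₂ : ℝ := (v12 - v11 + v22 - v21) / 2 with hc₂
    set c₃ : ℝ := (v12 - v11 - v22 + v21) / 2 with hc₃
    have hcombo : ∀ᵐ ω ∂P,
        (if ω ∈ B then (1:ℝ) else 0) = c₀ + c₁ * e ω + c₂ * η ω + c₃ * (e ω * η ω) := by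
      filter_upwards [hecover, hηcover] with ω h1 h2
      have hmemB : ω ∈ B ↔ (e ω, η ω) ∈ B₂ := by rw [← hBpre]; rfl
      rcases h1 with h1 | h1 <;> rcases h2 with h2 | h2 <;> rw [h1, h2] at hmemB <;>
        rw [hmemB, h1, h2]
      · rw [show (if ((1:ℝ), κ - 1) ∈ B₂ then (1:ℝ) else 0) = v11 from hv11.symm,
          hc₀, hc₁, hc₂, hc₃]
        ring
      · rw [show (if ((1:ℝ), κ) ∈ B₂ then (1:ℝ) else 0) = v12 from hv12.symm,
          hc₀, hc₁, hc₂, hc₃]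
        ring
      · rw [show (if ((-1:ℝ), κ - 1) ∈ B₂ then (1:ℝ) else 0) = v21 from hv21.symm,
          hc₀, hc₁, hc₂, hc₃]
        ring
      · rw [show (if ((-1:ℝ), κ) ∈ B₂ then (1:ℝ) else 0) = v22 from hv22.symm,
          hc₀, hc₁, hc₂, hc₃]
        ring
    have hind : ∀ f : Ω → ℝ,
        (fun ω => B.indicator f ω) =ᵐ[P] fun ω => f ω * (c₀ + c₁ * e ω + c₂ * η ω + c₃ * (e ω * η ω)) := by
      intro f
      filter_upwards [hcombo] with ω h
      by_cases hω : ω ∈ B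
      · rw [Set.indicator_of_mem hω]; rw [if_pos hω] at h; rw [← h]; ring
      · rw [Set.indicator_of_notMem hω]; rw [if_neg hω] at h; rw [← h]; ring
    calc ∫ ω in A ∩ B, Y ω ∂P
        = ∫ ω in A, B.indicator Y ω ∂P := (setIntegral_indicator hBm0).symm
      _ = ∫ ω in A, Y ω * (c₀ + c₁ * e ω + c₂ * η ω + c₃ * (e ω * η ω)) ∂P :=
          integral_congr_ae (ae_restrict_of_ae (hind Y))
      _ = ∫ ω in A, W ω * (c₀ + c₁ * e ω + c₂ * η ω + c₃ * (e ω * η ω)) ∂P :=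
          master A hA c₀ c₁ c₂ c₃
      _ = ∫ ω in A, B.indicator W ω ∂P :=
          (integral_congr_ae (ae_restrict_of_ae (hind W))).symm
      _ = ∫ ω in A ∩ B, W ω ∂P := setIntegral_indicator hBm0
  -- Dynkin's argument
  have hsets : ∀ s : Set Ω, MeasurableSet[G] s → ∫ ω in s, Y ω ∂P = ∫ ω in s, W ω ∂P := by
    intro s hs
    refine MeasurableSpace.induction_on_inter (m := G)
      (C := fun s _ => ∫ ω in s, Y ω ∂P = ∫ ω in s, W ω ∂P) hgen hπ ?_ hbasic ?_ ?_ s hs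
    · simp
    · intro t htG hC
      have htm0 : MeasurableSet[m0] t := hG _ htG
      have e1 := integral_add_compl htm0 hYint
      have e2 := integral_add_compl htm0 intW
      rw [htotal] at e1
      linarith [e1, e2, hC]
    · intro f hdisj hmeasG hC
      have hmf : ∀ i, MeasurableSet[m0] (f i) := fun i => hG _ (hmeasG i)
      have h1 := hasSum_integral_iUnion (μ := P) hmf hdisj hYint.integrableOn
      have h2 := hasSum_integral_iUnion (μ := P) hmf hdisj intW.integrableOn
      have h3 : (fun i => ∫ ω in f i, Y ω ∂P) = fun i => ∫ ω in f i, W ω ∂P := funext hC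
      rw [h3] at h1
      exact h1.unique h2
  -- conclude via conditional expectation w.r.t. G
  have hWm : StronglyMeasurable[G] W := by
    have haG : StronglyMeasurable[G] a := ham.mono le_sup_left
    have hbG : StronglyMeasurable[G] b := hbm.mono le_sup_left
    have hcG : StronglyMeasurable[G] c := hcm.mono le_sup_left
    have hdG : StronglyMeasurable[G] d := hdm.mono le_sup_left
    have heG : Measurable[G] e := hem₂.mono le_sup_right le_rfl
    have hηG : Measurable[G] η := hηm₂.mono le_sup_right le_rfl
    rw [hWdef]
    exact ((haG.measurable.add (hbG.measurable.mul heG)).add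
      ((measurable_const.mul hcG.measurable).mul hηG)).add
      (((measurable_const.mul hdG.measurable).mul (heG.mul hηG))) |>.stronglyMeasurable
  have hW_eq : W =ᵐ[P] P[Y|G] := by
    refine ae_eq_condExp_of_forall_setIntegral_eq hG hYint
      (fun s _ _ => intW.integrableOn) (fun s hs _ => (hsets s hs).symm) ?_
    exact hWm.aestronglyMeasurable
  have hY_eq : P[Y|G] = Y := condExp_of_stronglyMeasurable hG hYmeas hYint
  filter_upwards [hW_eq] with ω h
  have : Y ω = W ω := by rw [← hY_eq]; exact h.symm
  rw [this, hWdef]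
/-- The explicit penalized scheme satisfies `ā_j = pδ(ȳ_j - ξ_j)⁻`,
`k̄_j = pδ(ζ_j - ȳ_j)⁻` and the one-step backward equation.
Random variables are indexed from `0`, so `e j` stands for `e_{j+1}` of the paper. -/
theorem stmt_6
    {Ω : Type*} [m0 : MeasurableSpace Ω] (P : Measure Ω) [IsProbabilityMeasure P]
    (T lam : ℝ) (hT : 0 < T) (hlam : 0 < lam) (n : ℕ) (hn : 1 ≤ n)
    (δ κ : ℝ) (hδ : δ = T / n) (hκ : κ = Real.exp (-(lam * δ)))
    (e η : ℕ → Ω → ℝ) (he : ∀ i, Measurable (e i)) (hη : ∀ i, Measurable (η i))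
    (hiindep : iIndepFun
      (fun k : Fin n × Bool => fun ω => if k.2 then e k.1 ω else η k.1 ω) P)
    (he1 : ∀ i < n, P {ω | e i ω = 1} = 1 / 2)
    (hem1 : ∀ i < n, P {ω | e i ω = -1} = 1 / 2)
    (hη1 : ∀ i < n, P {ω | η i ω = κ - 1} = ENNReal.ofReal κ)
    (hη2 : ∀ i < n, P {ω | η i ω = κ} = ENNReal.ofReal (1 - κ))
    (𝓕 : ℕ → MeasurableSpace Ω)
    (h𝓕 : ∀ j, 𝓕 j = ⨆ i ∈ Finset.range j,
      (MeasurableSpace.comap (e i) inferInstance ⊔ MeasurableSpace.comap (η i) inferInstance))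
    (g : Ω → ℕ → ℝ → ℝ → ℝ → ℝ) (M Cg : ℝ) (hM : 0 ≤ M) (hCg : 0 ≤ Cg)
    (hgmeas : ∀ j < n, ∀ a b c : ℝ, Measurable[𝓕 j] (fun ω => g ω j a b c))
    (hgbdd : ∀ j < n, ∀ ω, |g ω j 0 0 0| ≤ M)
    (hglip : ∀ j < n, ∀ (ω) (a b c a' b' c' : ℝ),
      |g ω j a b c - g ω j a' b' c'| ≤ Cg * (|a - a'| + |b - b'| + |c - c'|))
    (ξ ζ : ℕ → Ω → ℝ)
    (hξ : ∀ j ≤ n, Measurable[𝓕 j] (ξ j) ∧ MemLp (ξ j) 2 P)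
    (hζ : ∀ j ≤ n, Measurable[𝓕 j] (ζ j) ∧ MemLp (ζ j) 2 P)
    (hξζ : ∀ j ≤ n, ∀ᵐ ω ∂P, ξ j ω ≤ ζ j ω)
    (p : ℝ) (hp : 0 < p)
    -- the explicit penalized scheme, defined backwards:
    (yb zb ub vb m ab kb : ℕ → Ω → ℝ)
    (hybn : yb n = ξ n)
    (hzb : ∀ j < n, zb j = fun ω =>
      (Real.sqrt δ)⁻¹ * (P[fun ω' => yb (j + 1) ω' * e j ω'|𝓕 j]) ω)
    (hub : ∀ j < n, ub j = fun ω =>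
      (κ * (1 - κ))⁻¹ * (P[fun ω' => yb (j + 1) ω' * η j ω'|𝓕 j]) ω)
    (hvb : ∀ j < n, vb j = fun ω =>
      (κ * (1 - κ))⁻¹ * (P[fun ω' => yb (j + 1) ω' * (e j ω' * η j ω')|𝓕 j]) ω)
    (hm : ∀ j < n, m j = fun ω =>
      (P[yb (j + 1)|𝓕 j]) ω + δ * g ω j ((P[yb (j + 1)|𝓕 j]) ω) (zb j ω) (ub j ω))
    (hab : ∀ j < n, ab j = fun ω =>
      p * δ / (1 + p * δ) * max (-(m j ω - ξ j ω)) 0)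
    (hkb : ∀ j < n, kb j = fun ω =>
      p * δ / (1 + p * δ) * max (-(ζ j ω - m j ω)) 0)
    (hyb : ∀ j < n, yb j = fun ω => m j ω + ab j ω - kb j ω) :
    ∀ j < n,
      (ab j =ᵐ[P] fun ω => p * δ * max (-(yb j ω - ξ j ω)) 0) ∧
      (kb j =ᵐ[P] fun ω => p * δ * max (-(ζ j ω - yb j ω)) 0) ∧
      (∀ᵐ ω ∂P,
        yb (j + 1) ω = yb j ω - δ * g ω j ((P[yb (j + 1)|𝓕 j]) ω) (zb j ω) (ub j ω)
          - ab j ω + kb j ω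
          + Real.sqrt δ * zb j ω * e j ω + ub j ω * η j ω + vb j ω * (e j ω * η j ω)) := by
  have hnpos : (0:ℝ) < n := by exact_mod_cast hn
  have hδpos : 0 < δ := by rw [hδ]; positivity
  have hκ0 : 0 < κ := by rw [hκ]; exact Real.exp_pos _
  have hκ1 : κ < 1 := by
    rw [hκ]
    apply Real.exp_lt_one_iff.mpr
    nlinarith
  have hpδ : 0 < p * δ := mul_pos hp hδpos
  have h𝓕le : ∀ j, 𝓕 j ≤ m0 := by
    intro j; rw [h𝓕 j]
    exact iSup₂_le fun i _ => sup_le (he i).comap_le (hη i).comap_le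
  have h𝓕succ : ∀ j, 𝓕 (j + 1) = 𝓕 j ⊔
      (MeasurableSpace.comap (e j) inferInstance ⊔ MeasurableSpace.comap (η j) inferInstance) := by
    intro j
    rw [h𝓕 (j + 1), h𝓕 j, Finset.range_add_one, Finset.iSup_insert, sup_comm]
  -- independence of 𝓕 j and σ(e j, η j)
  have hfmeas : ∀ k : Fin n × Bool,
      Measurable (fun ω => if k.2 then e (k.1 : ℕ) ω else η (k.1 : ℕ) ω) := by
    rintro ⟨i, b⟩
    cases b
    · simpa using hη (i : ℕ)
    · simpa using he (i : ℕ)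
  have hindepj : ∀ j < n, Indep (𝓕 j)
      (MeasurableSpace.comap (e j) inferInstance ⊔ MeasurableSpace.comap (η j) inferInstance)
      P := by
    intro j hj
    have hle : ∀ k : Fin n × Bool,
        MeasurableSpace.comap (fun ω => if k.2 then e (k.1 : ℕ) ω else η (k.1 : ℕ) ω)
          inferInstance ≤ m0 := fun k => (hfmeas k).comap_le
    have hiI := hiindep.iIndep
    have hST := indep_iSup_of_disjoint (μ := P) hle hiI
      (S := {k : Fin n × Bool | (k.1 : ℕ) < j}) (T := {k : Fin n × Bool | (k.1 : ℕ) < j}ᶜ)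
      disjoint_compl_right
    refine my_indep_mono hST ?_ ?_
    · rw [h𝓕 j]
      refine iSup₂_le fun i hi => ?_
      have hij : i < j := Finset.mem_range.mp hi
      have hin : i < n := lt_of_lt_of_le hij hj.le
      refine sup_le ?_ ?_
      · refine le_iSup₂_of_le (⟨i, hin⟩, true) (by simpa using hij) (le_of_eq (by congr 1))
      · refine le_iSup₂_of_le (⟨i, hin⟩, false) (by simpa using hij) (le_of_eq (by congr 1))
    · refine sup_le ?_ ?_
      · refine le_iSup₂_of_le (⟨j, hj⟩, true) (by simp) (le_of_eq (by congr 1))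
      · refine le_iSup₂_of_le (⟨j, hj⟩, false) (by simp) (le_of_eq (by congr 1))
  have hindfun : ∀ j, ∀ hj : j < n, IndepFun (e j) (η j) P := by
    intro j hj
    have h := hiindep.indepFun (i := (⟨j, hj⟩, true)) (j := (⟨j, hj⟩, false)) (by simp)
    simpa using h
  -- regularity by backward induction
  have hreg : ∀ d j : ℕ, j + d = n → Integrable (yb j) P ∧ StronglyMeasurable[𝓕 j] (yb j) := by
    intro d
    induction d with
    | zero =>
      intro j hj
      rw [Nat.add_zero] at hj; subst hj
      rw [hybn]
      exact ⟨(hξ j le_rfl).2.integrable one_le_two, ((hξ j le_rfl).1).stronglyMeasurable⟩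
    | succ d ih =>
      intro j hj
      have hjn : j < n := by omega
      have hIH := ih (j + 1) (by omega)
      have hamS : StronglyMeasurable[𝓕 j] (P[yb (j + 1)|𝓕 j]) := stronglyMeasurable_condExp
      have hai : Integrable (P[yb (j + 1)|𝓕 j]) P := integrable_condExp
      have hzbm : StronglyMeasurable[𝓕 j] (zb j) := by
        rw [hzb j hjn]; exact stronglyMeasurable_condExp.const_mul _
      have hzbi : Integrable (zb j) P := by
        rw [hzb j hjn]; exact integrable_condExp.const_mul _
      have hubm : StronglyMeasurable[𝓕 j] (ub j) := by
        rw [hub j hjn]; exact stronglyMeasurable_condExp.const_mul _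
      have hubi : Integrable (ub j) P := by
        rw [hub j hjn]; exact integrable_condExp.const_mul _
      have hgm : Measurable[𝓕 j]
          (fun ω => g ω j ((P[yb (j + 1)|𝓕 j]) ω) (zb j ω) (ub j ω)) := by
        refine measurable_g_comp (mα := 𝓕 j) (fun ω a b c => g ω j a b c) Cg hCg
          (hgmeas j hjn) (fun ω a b c a' b' c' => hglip j hjn ω a b c a' b' c')
          hamS.measurable hzbm.measurable hubm.measurable
      have hgi : Integrable (fun ω => g ω j ((P[yb (j + 1)|𝓕 j]) ω) (zb j ω) (ub j ω)) P := by
        refine Integrable.mono'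
          (g := fun ω => M + Cg * (|(P[yb (j + 1)|𝓕 j]) ω| + |zb j ω| + |ub j ω|))
          ((integrable_const M).add (((hai.abs.add hzbi.abs).add hubi.abs).const_mul Cg))
          ((hgm.mono (h𝓕le j) le_rfl)).aestronglyMeasurable ?_
        refine Eventually.of_forall fun ω => ?_
        have h1 := hglip j hjn ω ((P[yb (j + 1)|𝓕 j]) ω) (zb j ω) (ub j ω) 0 0 0
        have h2 := hgbdd j hjn ω
        simp only [sub_zero] at h1
        rw [Real.norm_eq_abs]
        calc |g ω j ((P[yb (j + 1)|𝓕 j]) ω) (zb j ω) (ub j ω)|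
            = |(g ω j ((P[yb (j + 1)|𝓕 j]) ω) (zb j ω) (ub j ω) - g ω j 0 0 0) + g ω j 0 0 0| :=
              by ring_nf
          _ ≤ |g ω j ((P[yb (j + 1)|𝓕 j]) ω) (zb j ω) (ub j ω) - g ω j 0 0 0| + |g ω j 0 0 0| :=
              abs_add_le _ _
          _ ≤ Cg * (|(P[yb (j + 1)|𝓕 j]) ω| + |zb j ω| + |ub j ω|) + M := add_le_add h1 h2
          _ = M + Cg * (|(P[yb (j + 1)|𝓕 j]) ω| + |zb j ω| + |ub j ω|) := by ring
      have hmi : Integrable (m j) P := by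
        rw [hm j hjn]; exact hai.add (hgi.const_mul δ)
      have hmmS : StronglyMeasurable[𝓕 j] (m j) := by
        rw [hm j hjn]
        exact (hamS.measurable.add (measurable_const.mul hgm)).stronglyMeasurable
      have hξm : Measurable[𝓕 j] (ξ j) := (hξ j hjn.le).1
      have hξi : Integrable (ξ j) P := (hξ j hjn.le).2.integrable one_le_two
      have hζm : Measurable[𝓕 j] (ζ j) := (hζ j hjn.le).1
      have hζi : Integrable (ζ j) P := (hζ j hjn.le).2.integrable one_le_two
      have maxbound : ∀ x : ℝ, ‖p * δ / (1 + p * δ) * max (-x) 0‖ ≤ p * δ / (1 + p * δ) * |x| := by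
        intro x
        have h1 : max (-x) 0 ≤ |x| := max_le (neg_abs_le x |>.trans (le_abs_self x) |> fun _ => neg_le_abs x) (abs_nonneg x)
        have h2 : (0:ℝ) ≤ max (-x) 0 := le_max_right _ _
        have h3 : (0:ℝ) ≤ p * δ / (1 + p * δ) := by positivity
        rw [Real.norm_eq_abs, abs_mul, abs_of_nonneg h2, abs_of_nonneg h3]
        exact mul_le_mul_of_nonneg_left h1 h3
      have habm : Measurable[𝓕 j] (ab j) := by
        rw [hab j hjn]
        exact measurable_const.mul (((hmmS.measurable.sub hξm).neg).max measurable_const)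
      have habi : Integrable (ab j) P := by
        rw [hab j hjn]
        refine Integrable.mono'
          (g := fun ω => p * δ / (1 + p * δ) * |m j ω - ξ j ω|)
          (((hmi.sub hξi).abs).const_mul _)
          (((measurable_const.mul (((hmmS.measurable.sub hξm).neg).max measurable_const)).mono
            (h𝓕le j) le_rfl)).aestronglyMeasurable ?_
        exact Eventually.of_forall fun ω => maxbound _
      have hkbm : Measurable[𝓕 j] (kb j) := by
        rw [hkb j hjn]
        exact measurable_const.mul (((hζm.sub hmmS.measurable).neg).max measurable_const)
      have hkbi : Integrable (kb j) P := by
        rw [hkb j hjn]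
        refine Integrable.mono'
          (g := fun ω => p * δ / (1 + p * δ) * |ζ j ω - m j ω|)
          (((hζi.sub hmi).abs).const_mul _)
          (((measurable_const.mul (((hζm.sub hmmS.measurable).neg).max measurable_const)).mono
            (h𝓕le j) le_rfl)).aestronglyMeasurable ?_
        exact Eventually.of_forall fun ω => maxbound _
      constructor
      · rw [hyb j hjn]; exact (hmi.add habi).sub hkbi
      · rw [hyb j hjn]
        exact ((hmmS.measurable.add habm).sub hkbm).stronglyMeasurable
  -- main conclusion
  intro j hj
  obtain ⟨hYint, hYmeas⟩ := hreg (n - (j + 1)) (j + 1) (by omega)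
  have hrepr := repr_lemma P (𝓕 j) (h𝓕le j) κ hκ0 hκ1 (e j) (η j) (he j) (hη j)
    (hindepj j hj) (hindfun j hj) (he1 j hj) (hem1 j hj) (hη1 j hj) (hη2 j hj)
    (yb (j + 1)) hYint (by rw [← h𝓕succ j]; exact hYmeas)
  refine ⟨?_, ?_, ?_⟩
  · filter_upwards [hξζ j hj.le] with ω hωξζ
    simp only [hab j hj, hkb j hj, hyb j hj]
    rw [show m j ω + p * δ / (1 + p * δ) * max (-(m j ω - ξ j ω)) 0
          - p * δ / (1 + p * δ) * max (-(ζ j ω - m j ω)) 0 - ξ j ω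
        = m j ω - ξ j ω + p * δ / (1 + p * δ) * max (-(m j ω - ξ j ω)) 0
          - p * δ / (1 + p * δ) * max (-(ζ j ω - m j ω)) 0 from by ring]
    exact (penalty_eq (p * δ) (m j ω - ξ j ω) (ζ j ω - m j ω) hpδ (by linarith)).symm
  · filter_upwards [hξζ j hj.le] with ω hωξζ
    simp only [hab j hj, hkb j hj, hyb j hj]
    rw [show ζ j ω - (m j ω + p * δ / (1 + p * δ) * max (-(m j ω - ξ j ω)) 0
          - p * δ / (1 + p * δ) * max (-(ζ j ω - m j ω)) 0)
        = ζ j ω - m j ω + p * δ / (1 + p * δ) * max (-(ζ j ω - m j ω)) 0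
          - p * δ / (1 + p * δ) * max (-(m j ω - ξ j ω)) 0 from by ring]
    exact (penalty_eq (p * δ) (ζ j ω - m j ω) (m j ω - ξ j ω) hpδ (by linarith)).symm
  · filter_upwards [hrepr] with ω h
    simp only [hyb j hj, hm j hj, hab j hj, hkb j hj, hzb j hj, hub j hj, hvb j hj] at h ⊢
    have hs : Real.sqrt δ * ((Real.sqrt δ)⁻¹ * (P[fun ω' => yb (j + 1) ω' * e j ω'|𝓕 j]) ω)
        = (P[fun ω' => yb (j + 1) ω' * e j ω'|𝓕 j]) ω := by
      rw [← mul_assoc, mul_inv_cancel₀ (ne_of_gt (Real.sqrt_pos.mpr hδpos)), one_mul]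
    rw [hs]
    linear_combination h
end
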